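/- Let T > 0, 0 < α < 1, k ≥ 1 an integer, and 0 < β ≤ 1 with β > α. Let u ∈ C^{0,β}([0,T]). There exists a constant C > 0 depending only on α, β, k and T (but not on τ or n) such that for every N ∈ ℕ with τ = T/N and every integer n with k ≤ n ≤ N, the L_k-type scheme satisfies |D_t^α u(t_n) − δ̂_τ^α u(t_n)| ≤ C [u]_{C^{0,β}[0,T]} τ^{β−α}. -/

import Mathlib

open Set MeasureTheory

/-- `M` is a Hölder bound (with exponent `β`) for `u` on `[0, T]`, i.e.
`[u]_{C^{0,β}[0,T]} ≤ M`; used with the least such `M`, it encodes the Hölder seminorm. -/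
def holderBnd (T β M : ℝ) (u : ℝ → ℝ) : Prop :=
  ∀ x ∈ Set.Icc (0:ℝ) T, ∀ y ∈ Set.Icc (0:ℝ) T, |u x - u y| ≤ M * |x - y| ^ β

/-- The degree-`k` Lagrange interpolant `Π_{k,j} u` of `u` at the `k+1` nodes
`t_{j-k}, …, t_j` (with `t_i = iτ`):
`Π_{k,j}u(s) = Σ_{l=0}^{k} u(t_{j-l}) Π_{i≠l} (s - t_{j-i})/(t_{j-l} - t_{j-i})`. -/
noncomputable def Pik (τ : ℝ) (u : ℝ → ℝ) (k j : ℕ) (s : ℝ) : ℝ :=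
  ∑ l ∈ Finset.range (k + 1), u (((j:ℝ) - (l:ℝ)) * τ) *
    ∏ i ∈ (Finset.range (k + 1)).erase l,
      (s - ((j:ℝ) - (i:ℝ)) * τ) / (((j:ℝ) - (l:ℝ)) * τ - ((j:ℝ) - (i:ℝ)) * τ)

/-- The Caputo fractional derivative of order `α` in integrated form:
`D_t^α u(t) = (1/Γ(1-α)) (u(t)-u(0))/t^α + (α/Γ(1-α)) ∫_0^t (u(t)-u(s))/(t-s)^{α+1} ds`. -/
noncomputable def caputo (α : ℝ) (u : ℝ → ℝ) (t : ℝ) : ℝ :=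
  (1 / Real.Gamma (1 - α)) * (u t - u 0) / t ^ α
    + (α / Real.Gamma (1 - α)) * ∫ s in (0:ℝ)..t, (u t - u s) / (t - s) ^ (α + 1)

/-- The piecewise interpolant `H^n u` of the `L_k`-type scheme: it equals `Π_{j,j} u` on
`(t_{j-1}, t_j)` for `1 ≤ j ≤ k-1` and `Π_{k,j} u` on `(t_{j-1}, t_j)` for `k ≤ j ≤ n`.
(For `s ∈ (t_{j-1}, t_j)` one has `⌈s/τ⌉ = j`.) -/
noncomputable def Lkinterp (τ : ℝ) (u : ℝ → ℝ) (k : ℕ) (s : ℝ) : ℝ :=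
  if ⌈s/τ⌉₊ < k then Pik τ u ⌈s/τ⌉₊ ⌈s/τ⌉₊ s else Pik τ u k ⌈s/τ⌉₊ s

/-- The `L_k`-type approximation `δ̂_τ^α u(t_n) = D_t^α (H^n u)(t_n)` of the Caputo
derivative. -/
noncomputable def Lkapprox (α τ : ℝ) (u : ℝ → ℝ) (k n : ℕ) : ℝ :=
  caputo α (Lkinterp τ u k) ((n:ℝ)*τ)

/-!
Write `H = H^n u` and `t = t_n`. Since `H` interpolates `u` at `0` and at `t`, the two Caputo
derivatives differ by `α/Γ(1-α) · ∫₀ᵗ (H - u)(s) / (t - s)^(α+1) ds`. On each cell the local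
interpolant is a combination of at most `k + 1` nodal values whose Lagrange weights are bounded
by `k^k`, so `|H - u| ≤ (k+1) k^k M (kτ)^β` everywhere; away from `t` the kernel integrates to at
most `τ^(-α)/α`. On the last cell the kernel is not integrable, but there
`H(s) - u(s) = (u(t) - u(s)) - (H(t) - H(s))`: the first difference is at most `M (t-s)^β` with
`β > α`, and the second is `O(M τ^β (t - s)/τ)` because every Lagrange weight but that of `t`
vanishes at `t`. Both make the kernel integrable, with contributions of order `M τ^(β-α)`.
-/

lemma intervalIntegrable_sub_rpow {r t a b : ℝ} (h : -1 < r ∨ (0:ℝ) ∉ uIcc (t - a) (t - b)) :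
    IntervalIntegrable (fun s => (t - s) ^ r) volume a b := by
  have h' : IntervalIntegrable (fun x : ℝ => x ^ r) volume (t - a) (t - b) := by
    rcases h with h | h
    · exact intervalIntegral.intervalIntegrable_rpow' h
    · exact intervalIntegral.intervalIntegrable_rpow (Or.inr h)
  simpa only [sub_sub_cancel] using h'.comp_sub_left t

lemma integral_sub_rpow {r t a b : ℝ} (h : -1 < r ∨ r ≠ -1 ∧ (0:ℝ) ∉ uIcc (t - b) (t - a)) :
    ∫ s in a..b, (t - s) ^ r = ((t - a) ^ (r + 1) - (t - b) ^ (r + 1)) / (r + 1) := by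
  rw [intervalIntegral.integral_comp_sub_left (fun x => x ^ r) t, integral_rpow h]

lemma intervalIntegrable_div_rpow_and_abs_integral_le_of_abs_le {α a b t B : ℝ} (hα : 0 < α)
    (hab : a ≤ b) (hbt : b < t) (hB : 0 ≤ B) {f : ℝ → ℝ}
    (hf : AEMeasurable f (volume.restrict (Ioc a b))) (hbound : ∀ s ∈ Ioc a b, |f s| ≤ B) :
    IntervalIntegrable (fun s => f s / (t - s) ^ (α + 1)) volume a b ∧
      |∫ s in a..b, f s / (t - s) ^ (α + 1)| ≤ B * (t - b) ^ (-α) / α := by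
  have h0 : (0:ℝ) ∉ uIcc (t - a) (t - b) := by
    rw [uIcc_of_ge (by linarith)]; exact fun h => by linarith [h.1]
  have hg : IntervalIntegrable (fun s => B * (t - s) ^ (-(α + 1))) volume a b :=
    (intervalIntegrable_sub_rpow (Or.inr h0)).const_mul B
  have hle : ∀ s ∈ Ioc a b, ‖f s / (t - s) ^ (α + 1)‖ ≤ B * (t - s) ^ (-(α + 1)) := by
    intro s hs
    have hts : 0 < t - s := by linarith [hs.2]
    rw [Real.norm_eq_abs, abs_div, abs_of_pos (Real.rpow_pos_of_pos hts _),
      Real.rpow_neg hts.le, div_eq_mul_inv]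
    exact mul_le_mul_of_nonneg_right (hbound s hs) (by positivity)
  refine ⟨hg.mono_fun' ?_ ?_, ?_⟩
  · rw [uIoc_of_le hab]
    exact (hf.div (by fun_prop)).aestronglyMeasurable
  · rw [uIoc_of_le hab]
    exact (ae_restrict_iff' measurableSet_Ioc).2 (Filter.Eventually.of_forall hle)
  · refine (intervalIntegral.norm_integral_le_of_norm_le hab
      (Filter.Eventually.of_forall hle) hg).trans ?_
    rw [intervalIntegral.integral_const_mul, integral_sub_rpow
      (Or.inr ⟨by linarith, by rwa [uIcc_comm]⟩), show -(α + 1) + 1 = -α by ring,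
      div_neg, ← neg_div, neg_sub, mul_div_assoc]
    gcongr
    exact sub_le_self _ (Real.rpow_nonneg (by linarith) _)

lemma intervalIntegrable_div_rpow_and_abs_integral_le_of_abs_le_rpow {α γ a t c : ℝ}
    (hαγ : α < γ) (hat : a ≤ t) {f : ℝ → ℝ} (hf : AEMeasurable f (volume.restrict (Ioc a t)))
    (hbound : ∀ s ∈ Ioc a t, |f s| ≤ c * (t - s) ^ γ) :
    IntervalIntegrable (fun s => f s / (t - s) ^ (α + 1)) volume a t ∧
      |∫ s in a..t, f s / (t - s) ^ (α + 1)| ≤ c * (t - a) ^ (γ - α) / (γ - α) := by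
  have hg : IntervalIntegrable (fun s => c * (t - s) ^ (γ - (α + 1))) volume a t :=
    (intervalIntegrable_sub_rpow (Or.inl (by linarith))).const_mul c
  have hle : ∀ᵐ s, s ∈ Ioc a t → ‖f s / (t - s) ^ (α + 1)‖ ≤ c * (t - s) ^ (γ - (α + 1)) := by
    filter_upwards [volume.ae_ne t] with s hst hs
    have hts : 0 < t - s := sub_pos.2 (lt_of_le_of_ne hs.2 hst)
    rw [Real.norm_eq_abs, abs_div, abs_of_pos (Real.rpow_pos_of_pos hts _),
      Real.rpow_sub hts, ← mul_div_assoc]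
    exact div_le_div_of_nonneg_right (hbound s hs) (Real.rpow_nonneg hts.le _)
  refine ⟨hg.mono_fun' ?_ ?_, ?_⟩
  · rw [uIoc_of_le hat]
    exact (hf.div (by fun_prop)).aestronglyMeasurable
  · rw [uIoc_of_le hat]
    exact (ae_restrict_iff' measurableSet_Ioc).2 hle
  · refine (intervalIntegral.norm_integral_le_of_norm_le hat hle hg).trans_eq ?_
    rw [intervalIntegral.integral_const_mul, integral_sub_rpow (Or.inl (by linarith)), sub_self,
      Real.zero_rpow (by linarith), sub_zero, show γ - (α + 1) + 1 = γ - α by ring, mul_div_assoc]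

lemma caputo_sub_caputo {α t : ℝ} {u v : ℝ → ℝ} (hv0 : v 0 = u 0) (hvt : v t = u t)
    (hu : IntervalIntegrable (fun s => (u t - u s) / (t - s) ^ (α + 1)) volume 0 t)
    (hvu : IntervalIntegrable (fun s => (v s - u s) / (t - s) ^ (α + 1)) volume 0 t) :
    caputo α u t - caputo α v t =
      α / Real.Gamma (1 - α) * ∫ s in (0:ℝ)..t, (v s - u s) / (t - s) ^ (α + 1) := by
  have hsplit : ∫ s in (0:ℝ)..t, (u t - v s) / (t - s) ^ (α + 1) =
      (∫ s in (0:ℝ)..t, (u t - u s) / (t - s) ^ (α + 1)) -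
        ∫ s in (0:ℝ)..t, (v s - u s) / (t - s) ^ (α + 1) := by
    rw [← intervalIntegral.integral_sub hu hvu]
    congr 1 with s
    ring
  simp only [caputo, hv0, hvt, hsplit]
  ring

lemma intervalIntegrable_and_abs_integral_last_cell_le {α β τ t K M : ℝ} (hα1 : α < 1)
    (hαβ : α < β) (hτ : 0 < τ) {u v : ℝ → ℝ}
    (hu : AEMeasurable u (volume.restrict (Ioc (t - τ) t)))
    (hv : AEMeasurable v (volume.restrict (Ioc (t - τ) t))) (hvt : v t = u t)
    (hholder : ∀ s ∈ Ioc (t - τ) t, |u t - u s| ≤ M * (t - s) ^ β)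
    (hnear : ∀ s ∈ Ioc (t - τ) t, |v t - v s| ≤ K * τ ^ β * ((t - s) / τ)) :
    IntervalIntegrable (fun s => (v s - u s) / (t - s) ^ (α + 1)) volume (t - τ) t ∧
      |∫ s in t - τ..t, (v s - u s) / (t - s) ^ (α + 1)| ≤
        (M / (β - α) + K / (1 - α)) * τ ^ (β - α) := by
  obtain ⟨hIu, hbound_u⟩ := intervalIntegrable_div_rpow_and_abs_integral_le_of_abs_le_rpow
    (f := fun s => u t - u s) hαβ (by linarith) (aemeasurable_const.sub hu) hholder
  obtain ⟨hIv, hbound_v⟩ := intervalIntegrable_div_rpow_and_abs_integral_le_of_abs_le_rpow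
    (f := fun s => v t - v s) (c := K * τ ^ β / τ) (γ := 1) hα1 (by linarith)
    (aemeasurable_const.sub hv)
    fun s hs => (hnear s hs).trans_eq (by rw [Real.rpow_one]; ring)
  have hsplit : ∀ s, (v s - u s) / (t - s) ^ (α + 1) =
      (u t - u s) / (t - s) ^ (α + 1) - (v t - v s) / (t - s) ^ (α + 1) := by
    intro s; rw [hvt]; ring
  refine ⟨(hIu.sub hIv).congr fun s _ => (hsplit s).symm, ?_⟩
  rw [intervalIntegral.integral_congr fun s _ => hsplit s,
    intervalIntegral.integral_sub hIu hIv]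
  simp only [sub_sub_cancel] at hbound_u hbound_v
  have hτβ : τ ^ β / τ * τ ^ (1 - α) = τ ^ (β - α) := by
    rw [div_mul_eq_mul_div, ← Real.rpow_add hτ, show β + (1 - α) = β - α + 1 by ring,
      Real.rpow_add_one hτ.ne', mul_div_cancel_right₀ _ hτ.ne']
  refine ((abs_sub _ _).trans (add_le_add hbound_u hbound_v)).trans_eq ?_
  linear_combination K / (1 - α) * hτβ

theorem abs_caputo_sub_le {α β τ t K M : ℝ} (hα0 : 0 < α) (hα1 : α < 1) (hαβ : α < β)
    (hτ : 0 < τ) (hτt : τ ≤ t) (hK : 0 ≤ K) {u v : ℝ → ℝ}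
    (hu : AEMeasurable u (volume.restrict (Ioc 0 t)))
    (hv : AEMeasurable v (volume.restrict (Ioc 0 t))) (hv0 : v 0 = u 0) (hvt : v t = u t)
    (hholder : ∀ s ∈ Ioc 0 t, |u t - u s| ≤ M * (t - s) ^ β)
    (hfar : ∀ s ∈ Ioc 0 (t - τ), |v s - u s| ≤ K * τ ^ β)
    (hnear : ∀ s ∈ Ioc (t - τ) t, |v t - v s| ≤ K * τ ^ β * ((t - s) / τ)) :
    |caputo α u t - caputo α v t| ≤
      α / Real.Gamma (1 - α) * (K / α + M / (β - α) + K / (1 - α)) * τ ^ (β - α) := by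
  have hfar_sub : Ioc 0 (t - τ) ⊆ Ioc 0 t := Ioc_subset_Ioc_right (by linarith)
  have hnear_sub : Ioc (t - τ) t ⊆ Ioc 0 t := Ioc_subset_Ioc_left (by linarith)
  obtain ⟨hIu, -⟩ := intervalIntegrable_div_rpow_and_abs_integral_le_of_abs_le_rpow
    (f := fun s => u t - u s) hαβ (by linarith) (aemeasurable_const.sub hu) hholder
  obtain ⟨hIfar, hbound_far⟩ := intervalIntegrable_div_rpow_and_abs_integral_le_of_abs_le
    (f := fun s => v s - u s) hα0 (sub_nonneg.2 hτt) (sub_lt_self t hτ) (by positivity)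
    ((hv.sub hu).mono_measure (Measure.restrict_mono hfar_sub le_rfl)) hfar
  obtain ⟨hInear, hbound_near⟩ := intervalIntegrable_and_abs_integral_last_cell_le hα1 hαβ hτ
    (hu.mono_measure (Measure.restrict_mono hnear_sub le_rfl))
    (hv.mono_measure (Measure.restrict_mono hnear_sub le_rfl)) hvt
    (fun s hs => hholder s (hnear_sub hs)) hnear
  rw [caputo_sub_caputo hv0 hvt hIu (hIfar.trans hInear),
    ← intervalIntegral.integral_add_adjacent_intervals hIfar hInear, abs_mul,
    abs_of_pos (div_pos hα0 (Real.Gamma_pos_of_pos (by linarith))), mul_assoc]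
  gcongr
  have hτβ : τ ^ β * τ ^ (-α) = τ ^ (β - α) := by rw [← Real.rpow_add hτ, sub_eq_add_neg]
  rw [sub_sub_cancel] at hbound_far
  refine ((abs_add_le _ _).trans (add_le_add hbound_far hbound_near)).trans_eq ?_
  linear_combination K / α * hτβ

noncomputable def lagFactor (τ : ℝ) (j l i : ℕ) (s : ℝ) : ℝ :=
  (s - ((j:ℝ) - (i:ℝ)) * τ) / (((j:ℝ) - (l:ℝ)) * τ - ((j:ℝ) - (i:ℝ)) * τ)

/-- The Lagrange basis polynomial of the node `t_{j-l}` among `t_{j-d}, …, t_j`; `Pik τ u d j s`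
is definitionally `∑ l ∈ Finset.range (d + 1), u (t_{j-l}) * lagBasis τ d j l s`. -/
noncomputable def lagBasis (τ : ℝ) (d j l : ℕ) (s : ℝ) : ℝ :=
  ∏ i ∈ (Finset.range (d + 1)).erase l, lagFactor τ j l i s

section Interpolation

variable {τ : ℝ} {d j k l : ℕ} {s : ℝ}

lemma sum_lagBasis (hτ : τ ≠ 0) (d j : ℕ) (s : ℝ) :
    ∑ l ∈ Finset.range (d + 1), lagBasis τ d j l s = 1 := by
  set x : ℕ → ℝ := fun i => ((j:ℝ) - i) * τ
  have hx : Set.InjOn x (Finset.range (d + 1) : Set ℕ) := fun a _ b _ hab => by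
    simpa [x, hτ] using hab
  have h := congrArg (Polynomial.eval s) (Lagrange.sum_basis hx ⟨0, by simp⟩)
  rw [Polynomial.eval_finsetSum, Polynomial.eval_one] at h
  rw [← h]
  refine Finset.sum_congr rfl fun l _ => ?_
  simp only [lagBasis, lagFactor, Lagrange.basis, Polynomial.eval_prod, Lagrange.basisDivisor,
    Polynomial.eval_mul, Polynomial.eval_C, Polynomial.eval_sub, Polynomial.eval_X, x,
    div_eq_inv_mul]

lemma Pik_sub_eq_sum (hτ : τ ≠ 0) (u : ℝ → ℝ) (d j : ℕ) (s c : ℝ) :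
    Pik τ u d j s - c =
      ∑ l ∈ Finset.range (d + 1), (u (((j:ℝ) - l) * τ) - c) * lagBasis τ d j l s := by
  rw [Finset.sum_congr rfl fun (l : ℕ) _ => sub_mul (u (((j:ℝ) - l) * τ)) c (lagBasis τ d j l s),
    Finset.sum_sub_distrib, ← Finset.mul_sum, sum_lagBasis hτ, mul_one]
  rfl

lemma Pik_natCast_mul_self (hτ : τ ≠ 0) (u : ℝ → ℝ) (d j : ℕ) :
    Pik τ u d j (j * τ) = u (j * τ) := by
  rw [← sub_eq_zero, Pik_sub_eq_sum hτ]
  refine Finset.sum_eq_zero fun l hl => ?_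
  rcases eq_or_ne l 0 with rfl | hl0
  · simp
  · rw [lagBasis, Finset.prod_eq_zero (i := 0) (by simp [Ne.symm hl0]) (by simp [lagFactor]),
      mul_zero]

lemma abs_sub_node_le (hτ : 0 < τ) (hk : 1 ≤ k) {i : ℕ} (hi : i ≤ k)
    (hs : s ∈ Icc (j * τ - τ) (j * τ)) : |s - ((j:ℝ) - i) * τ| ≤ k * τ := by
  have hk' : (1:ℝ) ≤ k := by exact_mod_cast hk
  have hi' : (i:ℝ) ≤ k := by exact_mod_cast hi
  obtain ⟨hs1, hs2⟩ := hs
  rw [abs_le]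
  constructor <;> nlinarith [(i.cast_nonneg : (0:ℝ) ≤ i)]

lemma abs_lagFactor_le (hτ : 0 < τ) (hk : 1 ≤ k) {i : ℕ} (hi : i ≤ k) (hil : i ≠ l)
    (hs : s ∈ Icc (j * τ - τ) (j * τ)) : |lagFactor τ j l i s| ≤ k := by
  have hden : τ ≤ |((j:ℝ) - l) * τ - ((j:ℝ) - i) * τ| := by
    have hil' : (1:ℝ) ≤ |(i:ℝ) - l| := by
      have h : (1:ℤ) ≤ |(i:ℤ) - l| := Int.one_le_abs (sub_ne_zero.2 (by exact_mod_cast hil))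
      exact_mod_cast h
    rw [show ((j:ℝ) - l) * τ - ((j:ℝ) - i) * τ = ((i:ℝ) - l) * τ by ring, abs_mul,
      abs_of_pos hτ]
    nlinarith
  rw [lagFactor, abs_div, div_le_iff₀ (hτ.trans_le hden)]
  calc _ ≤ k * τ := abs_sub_node_le hτ hk hi hs
    _ ≤ _ := by gcongr

lemma abs_lagFactor_zero_le (hτ : 0 < τ) (hl : l ≠ 0) (hs : s ≤ j * τ) :
    |lagFactor τ j l 0 s| ≤ (j * τ - s) / τ := by
  have hl' : (1:ℝ) ≤ l := by exact_mod_cast Nat.one_le_iff_ne_zero.2 hl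
  rw [lagFactor, show s - ((j:ℝ) - ((0:ℕ):ℝ)) * τ = -(j * τ - s) by push_cast; ring,
    show ((j:ℝ) - l) * τ - ((j:ℝ) - ((0:ℕ):ℝ)) * τ = -(l * τ) by push_cast; ring,
    neg_div_neg_eq, abs_of_nonneg (by positivity)]
  exact div_le_div_of_nonneg_left (by linarith) hτ (by nlinarith)

lemma abs_prod_lagFactor_le (hτ : 0 < τ) (hk : 1 ≤ k) {I : Finset ℕ}
    (hI : ∀ i ∈ I, i ≤ k ∧ i ≠ l) (hs : s ∈ Icc (j * τ - τ) (j * τ)) :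
    |∏ i ∈ I, lagFactor τ j l i s| ≤ (k:ℝ) ^ I.card := by
  rw [Finset.abs_prod, ← Finset.prod_const]
  exact Finset.prod_le_prod (fun _ _ => abs_nonneg _)
    fun i hi => abs_lagFactor_le hτ hk (hI i hi).1 (hI i hi).2 hs

lemma abs_lagBasis_le (hτ : 0 < τ) (hk : 1 ≤ k) (hdk : d ≤ k) (hl : l ≤ d)
    (hs : s ∈ Icc (j * τ - τ) (j * τ)) : |lagBasis τ d j l s| ≤ (k:ℝ) ^ k := by
  have hcard : ((Finset.range (d + 1)).erase l).card = d := by simp [Nat.lt_succ_of_le hl]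
  calc _ ≤ (k:ℝ) ^ ((Finset.range (d + 1)).erase l).card :=
        abs_prod_lagFactor_le hτ hk (fun i hi => by
          simp only [Finset.mem_erase, Finset.mem_range] at hi; omega) hs
    _ ≤ _ := pow_le_pow_right₀ (by exact_mod_cast hk) (hcard.le.trans hdk)

lemma abs_lagBasis_le_of_ne_zero (hτ : 0 < τ) (hk : 1 ≤ k) (hl : l ≤ k) (hl0 : l ≠ 0)
    (hs : s ∈ Icc (j * τ - τ) (j * τ)) :
    |lagBasis τ k j l s| ≤ (k:ℝ) ^ k * ((j * τ - s) / τ) := by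
  have h0 : 0 ∈ (Finset.range (k + 1)).erase l := by simp [Ne.symm hl0]
  have hcard : (((Finset.range (k + 1)).erase l).erase 0).card ≤ k := by
    simp [Finset.card_erase_of_mem h0, Nat.lt_succ_of_le hl]
  rw [lagBasis, ← Finset.mul_prod_erase _ _ h0, abs_mul, mul_comm]
  gcongr
  · refine (abs_prod_lagFactor_le hτ hk (fun i hi => ?_) hs).trans
      (pow_le_pow_right₀ (by exact_mod_cast hk) hcard)
    simp only [Finset.mem_erase, Finset.mem_range] at hi; omega
  · exact abs_lagFactor_zero_le hτ hl0 hs.2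

end Interpolation

lemma holderBnd.abs_sub_le {T β M : ℝ} {u : ℝ → ℝ} (hu : holderBnd T β M u) (hM : 0 ≤ M)
    (hβ : 0 ≤ β) {x y δ : ℝ} (hx : x ∈ Icc 0 T) (hy : y ∈ Icc 0 T) (hxy : |x - y| ≤ δ) :
    |u x - u y| ≤ M * δ ^ β :=
  (hu x hx y hy).trans (by gcongr)

section InterpolationError

variable {T β M τ : ℝ} {u : ℝ → ℝ} {d j k : ℕ} {s : ℝ}

lemma abs_Pik_sub_le (hu : holderBnd T β M u) (hM : 0 ≤ M) (hβ : 0 ≤ β) (hτ : 0 < τ)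
    (hd : 1 ≤ d) (hdk : d ≤ k) (hdj : d ≤ j) (hjT : j * τ ≤ T)
    (hs : s ∈ Icc (j * τ - τ) (j * τ)) :
    |Pik τ u d j s - u s| ≤ (k + 1) * k ^ k * M * (k * τ) ^ β := by
  have hk : 1 ≤ k := hd.trans hdk
  have hj : (1:ℝ) ≤ j := by exact_mod_cast hd.trans hdj
  have hsT : s ∈ Icc 0 T := ⟨by nlinarith [hs.1], hs.2.trans hjT⟩
  have hterm : ∀ l ∈ Finset.range (d + 1),
      |(u (((j:ℝ) - l) * τ) - u s) * lagBasis τ d j l s| ≤ M * (k * τ) ^ β * k ^ k := by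
    intro l hl
    have hld : l ≤ d := Nat.lt_succ_iff.mp (Finset.mem_range.mp hl)
    have hlj : (l:ℝ) ≤ j := by exact_mod_cast hld.trans hdj
    have hnode : ((j:ℝ) - l) * τ ∈ Icc 0 T := ⟨by nlinarith, by nlinarith⟩
    rw [abs_mul]
    gcongr
    · exact hu.abs_sub_le hM hβ hnode hsT
        ((abs_sub_comm _ _).trans_le (abs_sub_node_le hτ hk (hld.trans hdk) hs))
    · exact abs_lagBasis_le hτ hk hdk hld hs
  rw [Pik_sub_eq_sum hτ.ne']
  calc _ ≤ (Finset.range (d + 1)).card • (M * (k * τ) ^ β * k ^ k) :=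
        (Finset.abs_sum_le_sum_abs _ _).trans (Finset.sum_le_card_nsmul _ _ _ hterm)
    _ ≤ ((k:ℝ) + 1) * (M * (k * τ) ^ β * k ^ k) := by
        rw [Finset.card_range, nsmul_eq_mul, Nat.cast_add_one]
        gcongr
    _ = _ := by ring

lemma abs_sub_Pik_le (hu : holderBnd T β M u) (hM : 0 ≤ M) (hβ : 0 ≤ β) (hτ : 0 < τ)
    (hk : 1 ≤ k) (hkj : k ≤ j) (hjT : j * τ ≤ T) (hs : s ∈ Icc (j * τ - τ) (j * τ)) :
    |u (j * τ) - Pik τ u k j s| ≤ (k + 1) * k ^ k * M * (k * τ) ^ β * ((j * τ - s) / τ) := by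
  have hjT' : (j:ℝ) * τ ∈ Icc 0 T := ⟨by positivity, hjT⟩
  have hterm : ∀ l ∈ Finset.range (k + 1),
      |(u (((j:ℝ) - l) * τ) - u (j * τ)) * lagBasis τ k j l s| ≤
        M * (k * τ) ^ β * (k ^ k * ((j * τ - s) / τ)) := by
    intro l hl
    have hlk : l ≤ k := Nat.lt_succ_iff.mp (Finset.mem_range.mp hl)
    rcases eq_or_ne l 0 with rfl | hl0
    · simp only [Nat.cast_zero, sub_zero, sub_self, zero_mul, abs_zero]
      have : 0 ≤ (j:ℝ) * τ - s := by linarith [hs.2]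
      positivity
    have hlj : (l:ℝ) ≤ j := by exact_mod_cast hlk.trans hkj
    have hnode : ((j:ℝ) - l) * τ ∈ Icc 0 T := ⟨by nlinarith, by nlinarith⟩
    rw [abs_mul]
    gcongr
    · exact hu.abs_sub_le hM hβ hnode hjT' ((abs_sub_comm _ _).trans_le
        (abs_sub_node_le hτ hk hlk ⟨by linarith, le_rfl⟩))
    · exact abs_lagBasis_le_of_ne_zero hτ hk hlk hl0 hs
  rw [abs_sub_comm, Pik_sub_eq_sum hτ.ne']
  calc _ ≤ (Finset.range (k + 1)).card • (M * (k * τ) ^ β * (k ^ k * ((j * τ - s) / τ))) :=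
        (Finset.abs_sum_le_sum_abs _ _).trans (Finset.sum_le_card_nsmul _ _ _ hterm)
    _ = _ := by rw [Finset.card_range, nsmul_eq_mul]; push_cast; ring

end InterpolationError

lemma continuous_Pik (τ : ℝ) (u : ℝ → ℝ) (d j : ℕ) : Continuous (Pik τ u d j) := by
  unfold Pik; fun_prop

lemma measurable_Lkinterp (τ : ℝ) (u : ℝ → ℝ) (k : ℕ) : Measurable (Lkinterp τ u k) := by
  have hF : Measurable fun p : ℝ × ℕ =>
      if p.2 < k then Pik τ u p.2 p.2 p.1 else Pik τ u k p.2 p.1 :=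
    measurable_from_prod_countable_left fun j => by
      by_cases h : j < k
      · simpa only [h, if_true] using (continuous_Pik τ u j j).measurable
      · simpa only [h, if_false] using (continuous_Pik τ u k j).measurable
  exact hF.comp (measurable_id.prodMk (Nat.measurable_ceil.comp (measurable_id.div_const τ)))

lemma mem_Icc_ceil_div {τ s : ℝ} (hτ : 0 < τ) (hs : 0 ≤ s) :
    s ∈ Icc (⌈s / τ⌉₊ * τ - τ) (⌈s / τ⌉₊ * τ) := by
  have h1 : (⌈s / τ⌉₊ - 1 : ℝ) * τ < s :=
    (lt_div_iff₀ hτ).1 (by linarith [Nat.ceil_lt_add_one (div_nonneg hs hτ.le)])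
  exact ⟨by linarith, (div_le_iff₀ hτ).1 (Nat.le_ceil _)⟩

lemma ceil_div_eq_of_mem_Ioc {τ s : ℝ} {n : ℕ} (hτ : 0 < τ) (hs : s ∈ Ioc (n * τ - τ) (n * τ)) :
    ⌈s / τ⌉₊ = n := by
  refine le_antisymm (Nat.ceil_le.2 ((div_le_iff₀ hτ).2 hs.2)) ?_
  cases n with
  | zero => exact Nat.zero_le _
  | succ m =>
    refine Nat.add_one_le_iff.2 (Nat.lt_ceil.2 ((lt_div_iff₀ hτ).2 ?_))
    linarith [hs.1, (by push_cast; ring : ((m + 1 : ℕ) : ℝ) * τ - τ = m * τ)]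

lemma Lkinterp_zero (τ : ℝ) (u : ℝ → ℝ) {k : ℕ} (hk : 1 ≤ k) : Lkinterp τ u k 0 = u 0 := by
  simp [Lkinterp, Pik, show 0 < k by omega]

lemma Lkinterp_natCast_mul {τ : ℝ} (hτ : τ ≠ 0) (u : ℝ → ℝ) {k n : ℕ} (hkn : k ≤ n) :
    Lkinterp τ u k (n * τ) = u (n * τ) := by
  rw [Lkinterp, mul_div_cancel_right₀ _ hτ, Nat.ceil_natCast, if_neg (by omega),
    Pik_natCast_mul_self hτ]

section Lkinterp

variable {T β M τ : ℝ} {u : ℝ → ℝ} {k n : ℕ} {s : ℝ}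

lemma abs_Lkinterp_sub_le (hu : holderBnd T β M u) (hM : 0 ≤ M) (hβ : 0 ≤ β) (hτ : 0 < τ)
    (hk : 1 ≤ k) (hnT : n * τ ≤ T) (hs : s ∈ Ioc 0 (n * τ)) :
    |Lkinterp τ u k s - u s| ≤ (k + 1) * k ^ k * M * (k * τ) ^ β := by
  set j := ⌈s / τ⌉₊
  have hj : 1 ≤ j := Nat.one_le_iff_ne_zero.2 (Nat.ceil_pos.2 (div_pos hs.1 hτ)).ne'
  have hjn : j ≤ n := Nat.ceil_le.2 ((div_le_iff₀ hτ).2 hs.2)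
  have hjT : (j:ℝ) * τ ≤ T := le_trans (by gcongr) hnT
  have hsj := mem_Icc_ceil_div hτ hs.1.le
  rw [Lkinterp]
  split_ifs with h
  · exact abs_Pik_sub_le hu hM hβ hτ hj h.le le_rfl hjT hsj
  · exact abs_Pik_sub_le hu hM hβ hτ hk le_rfl (not_lt.1 h) hjT hsj

lemma abs_Lkinterp_sub_Lkinterp_le (hu : holderBnd T β M u) (hM : 0 ≤ M) (hβ : 0 ≤ β)
    (hτ : 0 < τ) (hk : 1 ≤ k) (hkn : k ≤ n) (hnT : n * τ ≤ T)
    (hs : s ∈ Ioc (n * τ - τ) (n * τ)) :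
    |Lkinterp τ u k (n * τ) - Lkinterp τ u k s| ≤
      (k + 1) * k ^ k * M * (k * τ) ^ β * ((n * τ - s) / τ) := by
  rw [Lkinterp_natCast_mul hτ.ne' u hkn, Lkinterp, ceil_div_eq_of_mem_Ioc hτ hs, if_neg (by omega)]
  exact abs_sub_Pik_le hu hM hβ hτ hk hkn hnT (Ioc_subset_Icc_self hs)

end Lkinterp

theorem stmt14_general (T : ℝ) (hT : 0 < T) (α : ℝ) (hα0 : 0 < α) (hα1 : α < 1)
    (k : ℕ) (hk : 1 ≤ k) (β : ℝ) (hαβ : α < β) :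
    ∃ C > 0, ∀ u : ℝ → ℝ, ContinuousOn u (Set.Icc 0 T) →
      ∀ M : ℝ, 0 ≤ M → holderBnd T β M u →
        ∀ N : ℕ, 0 < N → ∀ τ : ℝ, τ = T / N →
          ∀ n : ℕ, k ≤ n → n ≤ N →
            |caputo α u ((n:ℝ)*τ) - Lkapprox α τ u k n| ≤ C * M * τ ^ (β - α) := by
  have hβ : 0 ≤ β := (hα0.trans hαβ).le
  set K : ℝ := (k + 1) * k ^ k * k ^ β
  have hK : 0 < K := by positivity
  have hΓ : 0 < Real.Gamma (1 - α) := Real.Gamma_pos_of_pos (by linarith)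
  refine ⟨α / Real.Gamma (1 - α) * (K / α + 1 / (β - α) + K / (1 - α)), ?_, ?_⟩
  · have : 0 < β - α := by linarith
    have : 0 < 1 - α := by linarith
    positivity
  intro u hu M hM hholder N hN τ hτN n hkn hnN
  have hτ : 0 < τ := hτN ▸ by positivity
  have hnT : n * τ ≤ T := calc
    (n:ℝ) * τ ≤ N * τ := by gcongr
    _ = T := by rw [hτN]; field_simp
  have hτt : τ ≤ n * τ := le_mul_of_one_le_left hτ.le (by exact_mod_cast hk.trans hkn)
  have hkτ : ((k:ℝ) * τ) ^ β = k ^ β * τ ^ β := Real.mul_rpow (by positivity) hτ.le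
  refine (abs_caputo_sub_le (K := K * M) hα0 hα1 hαβ hτ hτt (by positivity)
    ((hu.mono fun s hs => ⟨hs.1.le, hs.2.trans hnT⟩).aemeasurable measurableSet_Ioc)
    (measurable_Lkinterp τ u k).aemeasurable (Lkinterp_zero τ u hk)
    (Lkinterp_natCast_mul hτ.ne' u hkn)
    (fun s hs => hholder.abs_sub_le hM hβ ⟨by positivity, hnT⟩ ⟨hs.1.le, hs.2.trans hnT⟩
      (abs_of_nonneg (sub_nonneg.2 hs.2)).le)
    (fun s hs => (abs_Lkinterp_sub_le hholder hM hβ hτ hk hnT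
      ⟨hs.1, hs.2.trans (by linarith)⟩).trans_eq (by rw [hkτ]; ring))
    (fun s hs => (abs_Lkinterp_sub_Lkinterp_le hholder hM hβ hτ hk hkn hnT hs).trans_eq
      (by rw [hkτ]; ring))).trans_eq (by ring)

theorem stmt14 (T : ℝ) (hT : 0 < T) (α : ℝ) (hα0 : 0 < α) (hα1 : α < 1)
    (k : ℕ) (hk : 1 ≤ k) (β : ℝ) (hαβ : α < β) (hβ1 : β ≤ 1) :
    ∃ C > 0, ∀ u : ℝ → ℝ, ContinuousOn u (Set.Icc 0 T) →
      ∀ M : ℝ, 0 ≤ M → holderBnd T β M u →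
        ∀ N : ℕ, 0 < N → ∀ τ : ℝ, τ = T / N →
          ∀ n : ℕ, k ≤ n → n ≤ N →
            |caputo α u ((n:ℝ)*τ) - Lkapprox α τ u k n| ≤ C * M * τ ^ (β - α) :=
  stmt14_general T hT α hα0 hα1 k hk β hαβ
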